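/- Let 1 ≤ k < n+1 be integers and D = gcd(k+1, n+2). The number of orbits of the rotation action of ℤ/(n+2) on (k+1)-element subsets of ℤ/(n+2) equals the sum, over all pairs (x,y) of positive divisors of D with y dividing x, of (D·μ(x/y)/((k+1)·x))·C(y·(n+2)/D − 1, y·(k+1)/D − 1), where μ is the Möbius function. -/

import Mathlib

/-!
By Burnside's lemma, `m` times the number of orbits is the total number of fixed points. A subset
fixed by `g` is a union of cosets of `⟨g⟩`, so if `g` has order `d` there are `C(m/d, r/d)` of
them when `d ∣ r` and none otherwise; as `ℤ/m` has `φ(d)` elements of order `d`, the number of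
orbits is `(1/m) ∑_{d ∣ D} φ(d) C(m/d, r/d)` with `D = gcd(r, m)`. The double sum collapses to
this: for fixed `y ∣ D` put `e = D/y` and `x = yz`; then `∑_{z ∣ e} μ(z)/z = φ(e)/e`, and
`r C(m/e, r/e) = m C(m/e - 1, r/e - 1)`.
-/

/-- The number of orbits of the rotation (translation) action of `ℤ/m` on the
set of `r`-element subsets of `ℤ/m`. -/
noncomputable def numOrbits (m r : ℕ) : ℕ :=
  Nat.card (Quot (fun s t : {s : Finset (ZMod m) // s.card = r} =>
    ∃ g : ZMod m, s.1.image (fun x => x + g) = t.1))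

open Finset AddAction
open scoped Pointwise ArithmeticFunction.Moebius

section StableFinset

variable {G : Type*} [AddCommGroup G] {H : AddSubgroup G}

section Fintype

variable [Fintype G] [DecidableEq (G ⧸ H)]

lemma card_filter_mk_mem (T : Finset (G ⧸ H)) :
    ({x | (x : G ⧸ H) ∈ T} : Finset G).card = Nat.card H * T.card := by
  rw [← Fintype.card_subtype, ← Nat.card_eq_fintype_card, ← Nat.card_eq_finsetCard,
    ← Nat.card_prod]
  exact Nat.card_congr (QuotientAddGroup.preimageMkEquivAddSubgroupProdSet H T)

lemma image_mk_filter_mk_mem (T : Finset (G ⧸ H)) :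
    ({x | (x : G ⧸ H) ∈ T} : Finset G).image (↑) = T := by
  ext q
  induction q using QuotientAddGroup.induction_on
  simp only [mem_image, mem_filter, mem_univ, true_and]
  exact ⟨fun ⟨x, hx, hxq⟩ => hxq ▸ hx, fun hq => ⟨_, hq, rfl⟩⟩

end Fintype

variable [DecidableEq G]

lemma mem_of_le_stabilizer {s : Finset G} (hs : H ≤ stabilizer G s) {x y : G}
    (hxy : (x : G ⧸ H) = y) (hx : x ∈ s) : y ∈ s := by
  have hmem : -x + y ∈ H := QuotientAddGroup.eq.mp hxy
  rw [← mem_stabilizer_iff.mp (hs hmem), mem_vadd_finset]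
  exact ⟨x, hx, by rw [vadd_eq_add]; abel⟩

variable [Fintype G] [DecidableEq (G ⧸ H)]

lemma filter_mk_mem_image_mk {s : Finset G} (hs : H ≤ stabilizer G s) :
    ({x | (x : G ⧸ H) ∈ s.image (↑)} : Finset G) = s := by
  ext y
  simp only [mem_filter, mem_univ, true_and, mem_image]
  exact ⟨fun ⟨x, hx, hxy⟩ => mem_of_le_stabilizer hs hxy hx, fun hy => ⟨y, hy, rfl⟩⟩

lemma le_stabilizer_filter_mk_mem (T : Finset (G ⧸ H)) :
    H ≤ stabilizer G ({x | (x : G ⧸ H) ∈ T} : Finset G) := by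
  intro h hh
  rw [mem_stabilizer_iff]
  ext y
  simp only [mem_vadd_finset, mem_filter, mem_univ, true_and, vadd_eq_add]
  constructor
  · rintro ⟨x, hx, rfl⟩
    rwa [add_comm, QuotientAddGroup.mk_add_of_mem x hh]
  · intro hy
    refine ⟨y + -h, ?_, by abel⟩
    rwa [QuotientAddGroup.mk_add_of_mem y (H.neg_mem hh)]

lemma card_eq_card_mul_card_image_mk_of_le_stabilizer {s : Finset G}
    (hs : H ≤ stabilizer G s) : s.card = Nat.card H * (s.image ((↑) : G → G ⧸ H)).card := by
  conv_lhs => rw [← filter_mk_mem_image_mk hs]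
  exact card_filter_mk_mem _

def stableFinsetEquiv (H : AddSubgroup G) [DecidableEq (G ⧸ H)] :
    {s : Finset G // H ≤ stabilizer G s} ≃ Finset (G ⧸ H) where
  toFun s := s.1.image (↑)
  invFun T := ⟨({x | (x : G ⧸ H) ∈ T} : Finset G), le_stabilizer_filter_mk_mem T⟩
  left_inv s := Subtype.ext (filter_mk_mem_image_mk s.2)
  right_inv T := image_mk_filter_mk_mem T

end StableFinset

lemma card_finset_mul_card_eq (α : Type*) [Fintype α] {d : ℕ} (hd : 0 < d) (r : ℕ) :
    Nat.card {T : Finset α // d * T.card = r} =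
      if d ∣ r then (Fintype.card α).choose (r / d) else 0 := by
  split_ifs with hdr
  · obtain ⟨c, rfl⟩ := hdr
    rw [Nat.mul_div_cancel_left _ hd, Nat.card_eq_fintype_card, ← Fintype.card_finset_len]
    exact Fintype.card_congr (Equiv.subtypeEquivRight fun T => Nat.mul_right_inj hd.ne')
  · have : IsEmpty {T : Finset α // d * T.card = r} := ⟨fun T => hdr ⟨_, T.2.symm⟩⟩
    exact Nat.card_of_isEmpty

section FixedSubsets

variable {G : Type*} [AddCommGroup G] [DecidableEq G] {r : ℕ}

lemma mem_fixedBy_powersetCard_iff {g : G} {s : Set.powersetCard G r} :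
    s ∈ fixedBy (Set.powersetCard G r) g ↔
      AddSubgroup.zmultiples g ≤ stabilizer G (s : Finset G) := by
  rw [AddSubgroup.zmultiples_le, mem_stabilizer_iff, mem_fixedBy, ← Set.powersetCard.coe_vadd,
    Subtype.coe_inj]

def fixedByPowersetCardEquiv (g : G) :
    fixedBy (Set.powersetCard G r) g ≃
      {s : {s : Finset G // AddSubgroup.zmultiples g ≤ stabilizer G s} // s.1.card = r} where
  toFun s := ⟨⟨s.1, mem_fixedBy_powersetCard_iff.mp s.2⟩, s.1.2⟩
  invFun s := ⟨⟨s.1.1, s.2⟩, mem_fixedBy_powersetCard_iff.mpr s.1.2⟩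
  left_inv _ := rfl
  right_inv _ := rfl

theorem card_fixedBy_powersetCard [Fintype G] (g : G) :
    Nat.card (fixedBy (Set.powersetCard G r) g) =
      if addOrderOf g ∣ r then (Nat.card G / addOrderOf g).choose (r / addOrderOf g) else 0 := by
  classical
  let H := AddSubgroup.zmultiples g
  have hcardH : Nat.card H = addOrderOf g := Nat.card_zmultiples g
  have hcardQ : Fintype.card (G ⧸ H) = Nat.card G / addOrderOf g := by
    rw [← Nat.card_eq_fintype_card, AddSubgroup.card_eq_card_quotient_mul_card_addSubgroup H,
      hcardH, Nat.mul_div_cancel _ (addOrderOf_pos g)]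
  rw [← hcardQ, ← card_finset_mul_card_eq (G ⧸ H) (addOrderOf_pos g), ← hcardH]
  exact Nat.card_congr ((fixedByPowersetCardEquiv g).trans ((stableFinsetEquiv H).subtypeEquiv
    fun s => by rw [card_eq_card_mul_card_image_mk_of_le_stabilizer s.2]; rfl))

end FixedSubsets

lemma sum_addOrderOf_eq_sum_totient {G M : Type*} [AddGroup G] [IsAddCyclic G] [Fintype G]
    [AddCommMonoid M] (f : ℕ → M) :
    ∑ g : G, f (addOrderOf g) = ∑ d ∈ (Fintype.card G).divisors, d.totient • f d := by
  classical
  rw [← sum_fiberwise_of_maps_to (t := (Fintype.card G).divisors) (g := addOrderOf)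
    fun g _ => Nat.mem_divisors.mpr ⟨addOrderOf_dvd_card, Fintype.card_ne_zero⟩]
  refine sum_congr rfl fun d hd => ?_
  rw [sum_congr rfl fun g hg => by rw [(mem_filter.mp hg).2], sum_const,
    IsAddCyclic.card_addOrderOf_eq_totient (Nat.dvd_of_mem_divisors hd)]

lemma Nat.filter_dvd_divisors_eq_divisors_gcd {m : ℕ} (hm : m ≠ 0) (r : ℕ) :
    {d ∈ m.divisors | d ∣ r} = (r.gcd m).divisors := by
  rw [← Nat.divisors_filter_dvd_of_dvd hm (Nat.gcd_dvd_right r m)]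
  exact filter_congr fun d hd => by rw [Nat.dvd_gcd_iff, and_iff_left (Nat.dvd_of_mem_divisors hd)]

lemma numOrbits_eq_card_orbitRel_quotient (m r : ℕ) :
    numOrbits m r = Nat.card (orbitRel.Quotient (ZMod m) (Set.powersetCard (ZMod m) r)) := by
  refine Nat.card_congr (Quot.congrRight fun (s t : Set.powersetCard (ZMod m) r) => ?_)
  rw [orbitRel_apply, mem_orbit_symm]
  refine exists_congr fun g => ?_
  rw [← Subtype.coe_inj, Set.powersetCard.coe_vadd, vadd_finset_def]
  simp only [vadd_eq_add, add_comm g]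

theorem card_orbitRel_quotient_powersetCard_mul (m r : ℕ) [NeZero m] :
    Nat.card (orbitRel.Quotient (ZMod m) (Set.powersetCard (ZMod m) r)) * m =
      ∑ d ∈ (r.gcd m).divisors, d.totient * (m / d).choose (r / d) := by
  classical
  have burnside :=
    sum_card_fixedBy_eq_card_orbits_mul_card_addGroup (ZMod m) (Set.powersetCard (ZMod m) r)
  simp only [← Nat.card_eq_fintype_card, card_fixedBy_powersetCard, Nat.card_zmod] at burnside
  rw [← burnside, sum_addOrderOf_eq_sum_totient (G := ZMod m)
    fun d => if d ∣ r then (m / d).choose (r / d) else 0, ZMod.card,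
    ← Nat.filter_dvd_divisors_eq_divisors_gcd (NeZero.ne m), sum_filter]
  simp only [smul_eq_mul, mul_ite, mul_zero]

lemma Nat.totient_eq_sum_moebius_mul_div {R : Type*} [Ring R] (e : ℕ) :
    (e.totient : R) = ∑ z ∈ e.divisors, (μ z : R) * ((e / z : ℕ) : R) := by
  rcases e.eq_zero_or_pos with rfl | he
  · simp
  rw [← Nat.sum_divisorsAntidiagonal fun a b => (μ a : R) * (b : R)]
  exact ((ArithmeticFunction.sum_eq_iff_sum_mul_moebius_eq (f := fun d => (d.totient : R))
    (g := (↑))).mp (fun n _ => by rw [← Nat.cast_sum, Nat.sum_totient]) e he).symm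

lemma Nat.sum_divisors_sum_divisors {M : Type*} [AddCommMonoid M] (n : ℕ) (f : ℕ → ℕ → M) :
    ∑ x ∈ n.divisors, ∑ y ∈ x.divisors, f x y =
      ∑ y ∈ n.divisors, ∑ z ∈ (n / y).divisors, f (y * z) y := by
  have hmem : ∀ x y, x ∈ n.divisors ∧ y ∈ x.divisors ↔
      x ∈ (n / y).divisors.image (y * ·) ∧ y ∈ n.divisors := by
    intro x y
    simp only [mem_image, Nat.mem_divisors]
    constructor
    · rintro ⟨⟨hxn, hn⟩, hyx, hx⟩
      have hyn := hyx.trans hxn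
      refine ⟨⟨x / y, ⟨Nat.div_dvd_div hyx hxn, ?_⟩, Nat.mul_div_cancel' hyx⟩, hyn, hn⟩
      exact (Nat.div_pos (Nat.le_of_dvd (Nat.pos_of_ne_zero hn) hyn)
        (Nat.pos_of_dvd_of_pos hyx (Nat.pos_of_ne_zero hx))).ne'
    · rintro ⟨⟨z, ⟨hz, hny⟩, rfl⟩, hyn, hn⟩
      have hy : 0 < y := Nat.pos_of_dvd_of_pos hyn (Nat.pos_of_ne_zero hn)
      exact ⟨⟨Nat.mul_dvd_of_dvd_div hyn hz, hn⟩, dvd_mul_right y z,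
        mul_ne_zero hy.ne' (ne_zero_of_dvd_ne_zero hny hz)⟩
  rw [sum_comm' hmem]
  refine sum_congr rfl fun y hy => sum_image fun a _ b _ hab => ?_
  exact Nat.eq_of_mul_eq_mul_left (Nat.pos_of_mem_divisors hy) hab

lemma Nat.mul_choose_div_eq {m r e : ℕ} (hem : e ∣ m) (her : e ∣ r) (hr : 0 < r) :
    r * (m / e).choose (r / e) = m * (m / e - 1).choose (r / e - 1) := by
  obtain ⟨a, rfl⟩ := hem
  obtain ⟨b, rfl⟩ := her
  have he : 0 < e := Nat.pos_of_mul_pos_right hr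
  have hb : 0 < b := Nat.pos_of_mul_pos_left hr
  rw [Nat.mul_div_cancel_left _ he, Nat.mul_div_cancel_left _ he]
  obtain ⟨b, rfl⟩ := Nat.exists_eq_add_one_of_ne_zero hb.ne'
  rcases a with _ | a
  · simp
  simp only [Nat.add_sub_cancel]
  rw [mul_assoc, mul_assoc, Nat.add_one_mul_choose_eq]
  ring

lemma sum_moebius_div_eq_totient_div {y e : ℕ} (hy : 0 < y) (r : ℚ) :
    ∑ z ∈ e.divisors, ((y * e : ℕ) : ℚ) * (μ (y * z / y) : ℚ) / (r * (y * z : ℕ)) =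
      e.totient / r := by
  rw [Nat.totient_eq_sum_moebius_mul_div, sum_div]
  refine sum_congr rfl fun z hz => ?_
  have hz0 : 0 < z := Nat.pos_of_mem_divisors hz
  rw [Nat.mul_div_cancel_left _ hy, Nat.cast_div (Nat.dvd_of_mem_divisors hz) (by positivity)]
  push_cast
  field_simp

theorem numOrbits_eq_sum_moebius_mul_choose (m r : ℕ) (hm : 0 < m) (hr : 0 < r) :
    (numOrbits m r : ℚ) =
      ∑ x ∈ (r.gcd m).divisors, ∑ y ∈ x.divisors,
        ((r.gcd m : ℚ) * (μ (x / y) : ℚ) / (r * x)) *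
          ((y * m / r.gcd m - 1).choose (y * r / r.gcd m - 1) : ℚ) := by
  have : NeZero m := ⟨hm.ne'⟩
  have hcount : (numOrbits m r : ℚ) * m =
      ∑ d ∈ (r.gcd m).divisors, (d.totient * (m / d).choose (r / d) : ℚ) := by
    rw [numOrbits_eq_card_orbitRel_quotient]
    exact_mod_cast card_orbitRel_quotient_powersetCard_mul m r
  rw [eq_div_of_mul_eq (by positivity) hcount, sum_div, ← Nat.sum_div_divisors,
    Nat.sum_divisors_sum_divisors]
  refine sum_congr rfl fun y hy => ?_
  have hy0 : 0 < y := Nat.pos_of_mem_divisors hy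
  obtain ⟨e, he⟩ := Nat.dvd_of_mem_divisors hy
  have hem : e ∣ m := (Dvd.intro_left y he.symm).trans (Nat.gcd_dvd_right r m)
  have her : e ∣ r := (Dvd.intro_left y he.symm).trans (Nat.gcd_dvd_left r m)
  have hbin : (r : ℚ) * (m / e).choose (r / e) = m * (m / e - 1).choose (r / e - 1) := by
    exact_mod_cast Nat.mul_choose_div_eq hem her hr
  rw [← sum_mul, he, Nat.mul_div_cancel_left _ hy0, sum_moebius_div_eq_totient_div hy0,
    Nat.mul_div_mul_left _ _ hy0, Nat.mul_div_mul_left _ _ hy0]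
  field_simp
  linear_combination (e.totient : ℚ) * hbin

theorem stmt14_general (n k : ℕ) :
    (numOrbits (n + 2) (k + 1) : ℚ) =
      ∑ x ∈ (Nat.gcd (k + 1) (n + 2)).divisors, ∑ y ∈ x.divisors,
        ((Nat.gcd (k + 1) (n + 2) : ℚ) * ((ArithmeticFunction.moebius (x / y) : ℤ) : ℚ) /
            ((k + 1) * x)) *
          (Nat.choose (y * (n + 2) / Nat.gcd (k + 1) (n + 2) - 1)
            (y * (k + 1) / Nat.gcd (k + 1) (n + 2) - 1) : ℚ) := by
  exact_mod_cast numOrbits_eq_sum_moebius_mul_choose (n + 2) (k + 1) (by omega) k.succ_pos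

/-- With `D = gcd(k+1, n+2)`, the number of orbits of the rotation action of `ℤ/(n+2)`
on `(k+1)`-element subsets equals the sum, over pairs `(x,y)` of positive divisors of `D`
with `y ∣ x`, of `D·μ(x/y)/((k+1)·x) · C(y(n+2)/D − 1, y(k+1)/D − 1)`. -/
theorem stmt14 (n k : ℕ) (hk : 1 ≤ k) (hkn : k < n + 1) :
    (numOrbits (n + 2) (k + 1) : ℚ) =
      ∑ x ∈ (Nat.gcd (k + 1) (n + 2)).divisors, ∑ y ∈ x.divisors,
        ((Nat.gcd (k + 1) (n + 2) : ℚ) * ((ArithmeticFunction.moebius (x / y) : ℤ) : ℚ) /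
            ((k + 1) * x)) *
          (Nat.choose (y * (n + 2) / Nat.gcd (k + 1) (n + 2) - 1)
            (y * (k + 1) / Nat.gcd (k + 1) (n + 2) - 1) : ℚ) :=
  stmt14_general n k
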